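/- Let B be a C*-algebra, E a Hilbert B-module, and K a subset of E. Then K is an ideal submodule of E (i.e. K equals the closed linear span of {x·i : x ∈ E, i ∈ I} for some closed two-sided ideal I of B) if and only if K is a closed ternary ideal of E (i.e. K is a closed linear subspace with x·⟨k,y⟩ ∈ K for all x, y ∈ E and k ∈ K). -/

import Mathlib

open scoped RightActions

/-- The closed linear span of a subset of a topological `ℂ`-module. -/
noncomputable def clSpan {M : Type*} [AddCommMonoid M] [Module ℂ M] [TopologicalSpace M]
    (S : Set M) : Set M :=
  closure (Submodule.span ℂ S : Set M)

/-- A subset is a (complex) linear subspace. -/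
def IsLinearSubspace {M : Type*} [AddCommMonoid M] [Module ℂ M] (K : Set M) : Prop :=
  (0 : M) ∈ K ∧ (∀ x ∈ K, ∀ y ∈ K, x + y ∈ K) ∧ ∀ (c : ℂ), ∀ x ∈ K, c • x ∈ K

/-- A closed two-sided ideal of a C*-algebra `B`. -/
structure IsClosedTwoSidedIdeal {B : Type*} [NonUnitalCStarAlgebra B] (I : Set B) : Prop where
  isClosed : IsClosed I
  subspace : IsLinearSubspace I
  mul_mem_left : ∀ (b : B), ∀ a ∈ I, b * a ∈ I
  mul_mem_right : ∀ (b : B), ∀ a ∈ I, a * b ∈ I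

/-- The Mathlib (December 2024) class `CStarModule`: a right Hilbert `A`-module, with `A` acting
through `Aᵐᵒᵖ`. Mathlib's current `CStarModule` is a left module, hence the new name. -/
class RightCStarModule (A : outParam <| Type*) (E : Type*) [NonUnitalSemiring A] [StarRing A]
    [Module ℂ A] [AddCommGroup E] [Module ℂ E] [PartialOrder A] [SMul Aᵐᵒᵖ E] [Norm A] [Norm E]
    extends Inner A E where
  inner_add_right {x} {y} {z} : inner x (y + z) = inner x y + inner x z
  inner_self_nonneg {x} : 0 ≤ inner x x
  inner_self {x} : inner x x = 0 ↔ x = 0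
  inner_op_smul_right {a : A} {x y : E} : inner x (y <• a) = inner x y * a
  inner_smul_right_complex {z : ℂ} {x} {y} : inner x (z • y) = z • inner x y
  star_inner x y : star (inner x y) = inner y x
  norm_eq_sqrt_norm_inner_self x : ‖x‖ = √‖inner x x‖

section HilbertModule

variable (B : Type*) [NonUnitalCStarAlgebra B] [PartialOrder B] [StarOrderedRing B]
variable {E : Type*} [NormedAddCommGroup E] [NormedSpace ℂ E] [SMul Bᵐᵒᵖ E] [RightCStarModule B E]

/-- `K ⊆ E` is an *ideal submodule* if it is the closed linear span of
`{x <• i : x ∈ E, i ∈ I}` for some closed two-sided ideal `I` of `B`. -/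
def IsIdealSubmodule (K : Set E) : Prop :=
  ∃ I : Set B, IsClosedTwoSidedIdeal I ∧
    K = clSpan {z : E | ∃ x : E, ∃ i ∈ I, z = x <• i}

/-- A *ternary ideal* of a Hilbert `B`-module `E`: a linear subspace `K` with
`x <• ⟪k, y⟫ ∈ K` for all `x y ∈ E` and `k ∈ K`. -/
def IsTernaryIdeal (K : Set E) : Prop :=
  IsLinearSubspace K ∧ ∀ (x y : E), ∀ k ∈ K, x <• (inner B k y : B) ∈ K

/-- `B_S`: the closed linear span in `B` of all inner products of elements of `S`. -/
noncomputable def rangeIdeal (S : Set E) : Set B :=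
  clSpan {b : B | ∃ k ∈ S, ∃ k' ∈ S, b = (inner B k k' : B)}

/-- The orthogonal complement of a subset of a Hilbert `B`-module. -/
def perp (S : Set E) : Set E :=
  {x : E | ∀ s ∈ S, (inner B x s : B) = 0}

end HilbertModule

/-!
Everything rests on local approximate units: for `a ≥ 0` the elements `d = a f(a)`, with `f`
a suitable function vanishing at `0`, make `(1 - d) a (1 - d)` arbitrarily small. For
`a = ⟪x, x⟫` this puts `x` in the closure of `x <• (⟪x, x⟫ B)`. Hence a closed ternary ideal `K`
is stable under the right action, so `B_K = rangeIdeal B K` is a closed two-sided ideal, and `K`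
is the closed span of `E <• B_K`. For `a = i* i` it shows that closed ideals are self-adjoint,
which is what makes the closed span of `E <• I` a ternary ideal:
`x <• ⟪z <• i, y⟫ = x <• (i* ⟪z, y⟫)`.
-/

section ClosedSpan

theorem Submodule.isLinearSubspace {M : Type*} [AddCommGroup M] [Module ℂ M] (p : Submodule ℂ M) :
    IsLinearSubspace (p : Set M) :=
  ⟨p.zero_mem, fun _ hx _ hy => p.add_mem hx hy, fun c _ hx => p.smul_mem c hx⟩

def IsLinearSubspace.toSubmodule {M : Type*} [AddCommGroup M] [Module ℂ M] {K : Set M}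
    (hK : IsLinearSubspace K) : Submodule ℂ M where
  carrier := K
  zero_mem' := hK.1
  add_mem' hx hy := hK.2.1 _ hx _ hy
  smul_mem' c _ hx := hK.2.2 c _ hx

variable {M N : Type*} [AddCommGroup M] [Module ℂ M] [TopologicalSpace M]
  [AddCommGroup N] [Module ℂ N] [TopologicalSpace N]

theorem subset_clSpan (S : Set M) : S ⊆ clSpan S :=
  fun _ hx => subset_closure (Submodule.subset_span hx)

theorem isClosed_clSpan (S : Set M) : IsClosed (clSpan S) :=
  isClosed_closure

theorem isLinearSubspace_clSpan [ContinuousAdd M] [ContinuousConstSMul ℂ M] (S : Set M) :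
    IsLinearSubspace (clSpan S) :=
  (Submodule.span ℂ S).topologicalClosure.isLinearSubspace

theorem clSpan_subset {S K : Set M} (hK : IsClosed K) (hK' : IsLinearSubspace K) (hS : S ⊆ K) :
    clSpan S ⊆ K :=
  closure_minimal (Submodule.span_le (p := hK'.toSubmodule).2 hS) hK

theorem mapsTo_clSpan {σ : ℂ →+* ℂ} (f : M →SL[σ] N) {S : Set M} {K : Set N} (hK : IsClosed K)
    (hK' : IsLinearSubspace K) (h : Set.MapsTo f S K) : Set.MapsTo f (clSpan S) K :=
  clSpan_subset (hK.preimage f.continuous)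
    (hK'.toSubmodule.comap (f : M →ₛₗ[σ] N)).isLinearSubspace h

end ClosedSpan

namespace RightCStarModule

variable {B : Type*} [NonUnitalCStarAlgebra B] [PartialOrder B]
variable {E : Type*} [NormedAddCommGroup E] [NormedSpace ℂ E] [SMul Bᵐᵒᵖ E] [RightCStarModule B E]

local notation "⟪" x ", " y "⟫" => inner B x y

theorem inner_add_left {x y z : E} : ⟪x + y, z⟫ = ⟪x, z⟫ + ⟪y, z⟫ := by
  rw [← star_inner z, inner_add_right, star_add, star_inner, star_inner]

theorem inner_op_smul_left {a : B} {x y : E} : ⟪x <• a, y⟫ = star a * ⟪x, y⟫ := by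
  rw [← star_inner y, inner_op_smul_right, star_mul, star_inner]

theorem inner_smul_left_complex {c : ℂ} {x y : E} : ⟪c • x, y⟫ = star c • ⟪x, y⟫ := by
  rw [← star_inner y, inner_smul_right_complex, star_smul, star_inner]

theorem inner_sub_right {x y z : E} : ⟪x, y - z⟫ = ⟪x, y⟫ - ⟪x, z⟫ :=
  eq_sub_of_add_eq (by rw [← inner_add_right, sub_add_cancel])

theorem inner_sub_left {x y z : E} : ⟪x - y, z⟫ = ⟪x, z⟫ - ⟪y, z⟫ :=
  eq_sub_of_add_eq (by rw [← inner_add_left, sub_add_cancel])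

theorem inner_zero_left {y : E} : ⟪0, y⟫ = 0 := by
  simpa using inner_sub_left (B := B) (x := (0 : E)) (y := 0) (z := y)

theorem norm_sq_eq (x : E) : ‖x‖ ^ 2 = ‖⟪x, x⟫‖ := by
  rw [norm_eq_sqrt_norm_inner_self x, Real.sq_sqrt (norm_nonneg _)]

section StarOrderedRing

variable [StarOrderedRing B]

theorem inner_mul_inner_swap_le (x y : E) : ⟪y, x⟫ * ⟪x, y⟫ ≤ ‖x‖ ^ 2 • ⟪y, y⟫ := by
  rcases eq_or_ne x 0 with rfl | hx
  · simp [inner_zero_left]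
  set a := ⟪x, y⟫
  set t := ‖x‖ ^ 2
  have ht : 0 < t := by have := norm_pos_iff.2 hx; positivity
  have h : 0 ≤ t • (t • ⟪y, y⟫ - star a * a) := calc
    (0 : B) ≤ ⟪x <• a - (t : ℂ) • y, x <• a - (t : ℂ) • y⟫ := inner_self_nonneg
    _ = star a * ⟪x, x⟫ * a - t • (star a * a) - t • (star a * a) + t • t • ⟪y, y⟫ := by
      simp only [inner_sub_left, inner_sub_right, inner_op_smul_left, inner_op_smul_right,
        inner_smul_left_complex, inner_smul_right_complex, star_inner, a]
      simp only [Complex.star_def, Complex.conj_ofReal, Complex.coe_smul, smul_mul_assoc,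
        mul_assoc, sub_mul, smul_sub]
      abel
    _ ≤ t • (star a * a) - t • (star a * a) - t • (star a * a) + t • t • ⟪y, y⟫ := by
      grw [CStarAlgebra.star_left_conjugate_le_norm_smul (star_inner x x), ← norm_sq_eq]
    _ = t • (t • ⟪y, y⟫ - star a * a) := by rw [smul_sub]; abel
  rw [smul_nonneg_iff_nonneg_of_pos_left ht, sub_nonneg, star_inner] at h
  exact h

theorem norm_inner_le (x y : E) : ‖⟪x, y⟫‖ ≤ ‖x‖ * ‖y‖ := by
  refine le_of_sq_le_sq ?_ (by positivity)
  calc ‖⟪x, y⟫‖ ^ 2 = ‖⟪y, x⟫ * ⟪x, y⟫‖ := by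
        rw [← star_inner x y, CStarRing.norm_star_mul_self, sq]
    _ ≤ ‖‖x‖ ^ 2 • ⟪y, y⟫‖ := by
        refine CStarAlgebra.norm_le_norm_of_nonneg_of_le ?_ (inner_mul_inner_swap_le x y)
        rw [← star_inner x y]
        exact star_mul_self_nonneg _
    _ = (‖x‖ * ‖y‖) ^ 2 := by
        rw [norm_smul, Real.norm_of_nonneg (by positivity), ← norm_sq_eq, mul_pow]

def innerSLFlip (y : E) : E →L⋆[ℂ] B :=
  LinearMap.mkContinuous
    { toFun := fun x => ⟪x, y⟫
      map_add' := fun _ _ => inner_add_left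
      map_smul' := fun _ _ => inner_smul_left_complex }
    ‖y‖ fun x => (norm_inner_le x y).trans_eq (mul_comm _ _)

theorem innerSLFlip_apply (x y : E) : innerSLFlip y x = ⟪x, y⟫ := rfl

end StarOrderedRing

theorem ext_inner_left {u v : E} (h : ∀ z : E, ⟪z, u⟫ = ⟪z, v⟫) : u = v := by
  rw [← sub_eq_zero, ← inner_self (A := B), inner_sub_right, h, sub_self]

theorem op_smul_add (x : E) (a b : B) : x <• (a + b) = x <• a + x <• b :=
  ext_inner_left fun z => by simp only [inner_op_smul_right, inner_add_right, mul_add]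

theorem op_smul_complex_smul (c : ℂ) (x : E) (a : B) : x <• (c • a) = c • (x <• a) :=
  ext_inner_left fun z => by
    simp only [inner_op_smul_right, inner_smul_right_complex, mul_smul_comm]

theorem op_smul_mul (x : E) (a b : B) : x <• (a * b) = x <• a <• b :=
  ext_inner_left fun z => by simp only [inner_op_smul_right, mul_assoc]

theorem sub_op_smul (x y : E) (a : B) : (x - y) <• a = x <• a - y <• a :=
  ext_inner_left fun z => by simp only [inner_op_smul_right, inner_sub_right, sub_mul]

theorem norm_op_smul_le (x : E) (a : B) : ‖x <• a‖ ≤ ‖x‖ * ‖a‖ := by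
  refine le_of_sq_le_sq ?_ (by positivity)
  calc ‖x <• a‖ ^ 2 = ‖star a * ⟪x, x⟫ * a‖ := by
        rw [norm_sq_eq, inner_op_smul_right, inner_op_smul_left, mul_assoc]
    _ ≤ ‖a‖ * ‖⟪x, x⟫‖ * ‖a‖ := by
        grw [norm_mul_le, norm_mul_le, norm_star]
    _ = (‖x‖ * ‖a‖) ^ 2 := by rw [← norm_sq_eq]; ring

theorem lipschitzWith_op_smul (a : B) : LipschitzWith ‖a‖₊ fun x : E => x <• a :=
  LipschitzWith.of_dist_le_mul fun x y => by
    rw [dist_eq_norm, dist_eq_norm, ← sub_op_smul, mul_comm]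
    exact norm_op_smul_le _ _

def opSMulCLM (x : E) : B →L[ℂ] E :=
  LinearMap.mkContinuous
    { toFun := fun a => x <• a
      map_add' := op_smul_add x
      map_smul' := fun c a => op_smul_complex_smul c x a }
    ‖x‖ (norm_op_smul_le x)

theorem opSMulCLM_apply (x : E) (a : B) : opSMulCLM x a = x <• a := rfl

end RightCStarModule

section LocalUnits

variable {B : Type*} [NonUnitalCStarAlgebra B] [PartialOrder B] [StarOrderedRing B]

/-- `d = a * c` is an approximate unit for `a` alone: the expression below is `(1 - d) a (1 - d)`
computed in the unitization. -/
theorem CStarAlgebra.exists_isSelfAdjoint_mul_norm_lt {a : B} (ha : 0 ≤ a) {ε : ℝ} (hε : 0 < ε) :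
    ∃ c : B, IsSelfAdjoint (a * c) ∧
      ‖a - a * (a * c) - a * c * a + a * c * a * (a * c)‖ < ε := by
  set δ := ε / 2
  have hδ : 0 < δ := by positivity
  have hspec : ∀ t ∈ quasispectrum ℝ a, 0 ≤ t := quasispectrum_nonneg_of_nonneg a ha
  set f : ℝ → ℝ := fun t => t / (t + δ) ^ 2
  have hf : ContinuousOn f (quasispectrum ℝ a) :=
    continuousOn_id.div (by fun_prop) fun t ht => by have := hspec t ht; positivity
  set g : ℝ → ℝ := fun t => t * f t
  have hg : ContinuousOn g (quasispectrum ℝ a) := continuousOn_id.mul hf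
  have hd : a * cfcₙ f a = cfcₙ g a := by
    rw [cfcₙ_mul (fun t => t) f a, cfcₙ_id' ℝ a]
  refine ⟨cfcₙ f a, hd ▸ cfcₙ_predicate _ a, ?_⟩
  have hcfc : a - a * cfcₙ g a - cfcₙ g a * a + cfcₙ g a * a * cfcₙ g a
      = cfcₙ (fun t => t - t * g t - g t * t + g t * t * g t) a := by
    rw [cfcₙ_add (fun t => t - t * g t - g t * t) (fun t => g t * t * g t) a,
      cfcₙ_sub (fun t => t - t * g t) (fun t => g t * t) a,
      cfcₙ_sub (fun t => t) (fun t => t * g t) a, cfcₙ_mul (fun t => g t * t) g a,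
      cfcₙ_mul g (fun t => t) a, cfcₙ_mul (fun t => t) g a, cfcₙ_id' ℝ a]
  rw [hd, hcfc]
  refine (norm_cfcₙ_le fun t ht => ?_).trans_lt (half_lt_self hε)
  have ht := hspec t ht
  have hval : t - t * g t - g t * t + g t * t * g t
      = t * δ ^ 2 * (2 * t + δ) ^ 2 / (t + δ) ^ 4 := by
    have : t + δ ≠ 0 := by positivity
    simp only [g, f]
    field_simp
    ring
  rw [hval, Real.norm_of_nonneg (by positivity), div_le_iff₀ (by positivity)]
  have h₁ : (2 * t + δ) ^ 2 ≤ 4 * (t + δ) ^ 2 := by nlinarith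
  have h₂ : 4 * t * δ ≤ (t + δ) ^ 2 := by nlinarith [sq_nonneg (t - δ)]
  calc t * δ ^ 2 * (2 * t + δ) ^ 2 ≤ t * δ ^ 2 * (4 * (t + δ) ^ 2) := by gcongr
    _ = δ * (t + δ) ^ 2 * (4 * t * δ) := by ring
    _ ≤ δ * (t + δ) ^ 2 * (t + δ) ^ 2 := by gcongr
    _ = δ * (t + δ) ^ 4 := by ring

theorem CStarAlgebra.mem_closure_range_mul_star_self_mul_mul (j : B) :
    j ∈ closure (Set.range fun c : B => j * star j * c * j) := by
  rw [Metric.mem_closure_iff]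
  intro ε hε
  obtain ⟨c, hd, hc⟩ :=
    exists_isSelfAdjoint_mul_norm_lt (mul_star_self_nonneg j) (pow_pos hε 2)
  refine ⟨_, ⟨c, rfl⟩, lt_of_pow_lt_pow_left₀ 2 hε.le ?_⟩
  rw [dist_eq_norm, sq, ← CStarRing.norm_self_mul_star]
  refine (congrArg norm ?_).trans_lt hc
  rw [star_sub, star_mul, hd.star_eq]
  noncomm_ring

theorem IsClosedTwoSidedIdeal.star_mem {I : Set B} (hI : IsClosedTwoSidedIdeal I) {i : B}
    (hi : i ∈ I) : star i ∈ I := by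
  refine closure_minimal ?_ hI.isClosed (CStarAlgebra.mem_closure_range_mul_star_self_mul_mul _)
  rintro _ ⟨c, rfl⟩
  dsimp only
  rw [star_star, mul_assoc, mul_assoc]
  exact hI.mul_mem_left _ _ (hI.mul_mem_right _ _ hi)

variable {E : Type*} [NormedAddCommGroup E] [NormedSpace ℂ E] [SMul Bᵐᵒᵖ E] [RightCStarModule B E]

theorem RightCStarModule.mem_closure_range_op_smul_inner_self_mul (x : E) :
    x ∈ closure (Set.range fun c : B => x <• (inner B x x * c)) := by
  rw [Metric.mem_closure_iff]
  intro ε hε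
  obtain ⟨c, hd, hc⟩ :=
    CStarAlgebra.exists_isSelfAdjoint_mul_norm_lt (inner_self_nonneg (A := B) (x := x))
      (pow_pos hε 2)
  refine ⟨_, ⟨c, rfl⟩, lt_of_pow_lt_pow_left₀ 2 hε.le ?_⟩
  rw [dist_eq_norm, norm_sq_eq]
  refine (congrArg norm ?_).trans_lt hc
  simp only [inner_sub_left, inner_sub_right, inner_op_smul_left, inner_op_smul_right, hd.star_eq]
  noncomm_ring

end LocalUnits

theorem IsIdealSubmodule.isClosed {B : Type*} [NonUnitalCStarAlgebra B] {E : Type*}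
    [NormedAddCommGroup E] [NormedSpace ℂ E] [SMul Bᵐᵒᵖ E] {K : Set E}
    (hK : IsIdealSubmodule B K) : IsClosed K := by
  obtain ⟨I, -, rfl⟩ := hK
  exact isClosed_clSpan _

section TernaryIdeals

variable {B : Type*} [NonUnitalCStarAlgebra B] [PartialOrder B] [StarOrderedRing B]
variable {E : Type*} [NormedAddCommGroup E] [NormedSpace ℂ E] [SMul Bᵐᵒᵖ E] [RightCStarModule B E]

open RightCStarModule

theorem IsIdealSubmodule.isTernaryIdeal {K : Set E} (hK : IsIdealSubmodule B K) :
    IsTernaryIdeal B K := by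
  obtain ⟨I, hI, rfl⟩ := hK
  refine ⟨isLinearSubspace_clSpan _, fun x y k hk => ?_⟩
  refine mapsTo_clSpan ((opSMulCLM x).comp (innerSLFlip y)) (isClosed_clSpan _)
    (isLinearSubspace_clSpan _) ?_ hk
  rintro _ ⟨z, i, hi, rfl⟩
  refine subset_clSpan _ ⟨x, star i * inner B z y, hI.mul_mem_right _ _ (hI.star_mem hi), ?_⟩
  rw [ContinuousLinearMap.comp_apply, innerSLFlip_apply, opSMulCLM_apply, inner_op_smul_left]

theorem IsTernaryIdeal.op_smul_mem {K : Set E} (hK : IsTernaryIdeal B K) (hKc : IsClosed K)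
    {k : E} (hk : k ∈ K) (b : B) : k <• b ∈ K := by
  refine hKc.closure_subset <| map_mem_closure (lipschitzWith_op_smul b).continuous
    (mem_closure_range_op_smul_inner_self_mul k) ?_
  rintro _ ⟨c, rfl⟩
  dsimp only
  rw [← RightCStarModule.op_smul_mul, mul_assoc, ← inner_op_smul_right]
  exact hK.2 k _ k hk

theorem IsTernaryIdeal.isClosedTwoSidedIdeal_rangeIdeal {K : Set E} (hK : IsTernaryIdeal B K)
    (hKc : IsClosed K) : IsClosedTwoSidedIdeal (rangeIdeal B K) where
  isClosed := isClosed_clSpan _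
  subspace := isLinearSubspace_clSpan _
  mul_mem_left b _ ha := by
    refine mapsTo_clSpan (ContinuousLinearMap.mul ℂ B b) (isClosed_clSpan _)
      (isLinearSubspace_clSpan _) ?_ ha
    rintro _ ⟨k, hk, k', hk', rfl⟩
    refine subset_clSpan _ ⟨k <• star b, hK.op_smul_mem hKc hk _, k', hk', ?_⟩
    rw [inner_op_smul_left, star_star, ContinuousLinearMap.mul_apply']
  mul_mem_right b _ ha := by
    refine mapsTo_clSpan ((ContinuousLinearMap.mul ℂ B).flip b) (isClosed_clSpan _)
      (isLinearSubspace_clSpan _) ?_ ha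
    rintro _ ⟨k, hk, k', hk', rfl⟩
    refine subset_clSpan _ ⟨k, hk, k' <• b, hK.op_smul_mem hKc hk' b, ?_⟩
    rw [inner_op_smul_right, ContinuousLinearMap.flip_apply, ContinuousLinearMap.mul_apply']

theorem IsTernaryIdeal.eq_clSpan_op_smul_rangeIdeal {K : Set E} (hK : IsTernaryIdeal B K)
    (hKc : IsClosed K) : K = clSpan {z : E | ∃ x : E, ∃ i ∈ rangeIdeal B K, z = x <• i} := by
  have hI := hK.isClosedTwoSidedIdeal_rangeIdeal hKc
  refine subset_antisymm (fun k hk => ?_) (clSpan_subset hKc hK.1 ?_)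
  · refine closure_minimal ?_ (isClosed_clSpan _) (mem_closure_range_op_smul_inner_self_mul k)
    rintro _ ⟨c, rfl⟩
    exact subset_clSpan _ ⟨k, _, hI.mul_mem_right c _ (subset_clSpan _ ⟨k, hk, k, hk, rfl⟩), rfl⟩
  · rintro _ ⟨x, i, hi, rfl⟩
    refine mapsTo_clSpan (opSMulCLM x) hKc hK.1 ?_ hi
    rintro _ ⟨k, hk, k', hk', rfl⟩
    exact hK.2 x k' k hk

end TernaryIdeals

theorem isIdealSubmodule_iff_isClosed_and_isTernaryIdeal_general
    {B : Type*} [NonUnitalCStarAlgebra B] [PartialOrder B] [StarOrderedRing B]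
    {E : Type*} [NormedAddCommGroup E] [NormedSpace ℂ E] [SMul Bᵐᵒᵖ E]
    [RightCStarModule B E] (K : Set E) :
    IsIdealSubmodule B K ↔ IsClosed K ∧ IsTernaryIdeal B K :=
  ⟨fun hK => ⟨hK.isClosed, hK.isTernaryIdeal⟩, fun ⟨hKc, hK⟩ =>
    ⟨rangeIdeal B K, hK.isClosedTwoSidedIdeal_rangeIdeal hKc, hK.eq_clSpan_op_smul_rangeIdeal hKc⟩⟩

/-- `K` is an ideal submodule of `E` if and only if `K` is a closed ternary
ideal of `E`. -/
theorem isIdealSubmodule_iff_isClosed_and_isTernaryIdeal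
    {B : Type*} [NonUnitalCStarAlgebra B] [PartialOrder B] [StarOrderedRing B]
    {E : Type*} [NormedAddCommGroup E] [NormedSpace ℂ E] [SMul Bᵐᵒᵖ E]
    [RightCStarModule B E] [CompleteSpace E] (K : Set E) :
    IsIdealSubmodule B K ↔ IsClosed K ∧ IsTernaryIdeal B K :=
  isIdealSubmodule_iff_isClosed_and_isTernaryIdeal_general K
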